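/- Let (A, B) be a positive pair, (R, H) a square root of A, T := R*^{[-1]}B, and P_B the orthogonal projection onto the closure of ran T in H. Then the extremal operator 𝐀_ex = [[A, B],[B~, ω(A,B)]] is doubly extremal (i.e., ω(ω(A,B), B~) = A) if and only if ker T* = ker R*; equivalently, if and only if closure(ran T) = closure(ran R). -/

import Mathlib

open scoped ComplexOrder ComplexConjugate
open Complex

noncomputable section

/-- For a linear map `R : V → H` into a Hilbert space, `adjMap R : H → V'` is the
operator `R*`, sending `h` to the antilinear functional `v ↦ (h | R v)`
(in Mathlib's convention, `v ↦ ⟪R v, h⟫`). -/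
def adjMap {V H : Type*} [AddCommGroup V] [Module ℂ V]
    [NormedAddCommGroup H] [InnerProductSpace ℂ H] (R : V →ₗ[ℂ] H) :
    H →ₗ[ℂ] (V →ₗ⋆[ℂ] ℂ) where
  toFun h :=
    { toFun := fun v => @inner ℂ _ _ (R v) h
      map_add' := fun v w => by simp [inner_add_left]
      map_smul' := fun c v => by simp [inner_smul_left, mul_comm] }
  map_add' h₁ h₂ := by ext v; simp [inner_add_right]
  map_smul' c h := by ext v; simp [inner_smul_right]

/-- For `B : Y → X'`, the operator `B~ := B'↾X : X → Y'`, `(B~ x) y = conj (⟨B y, x⟩)`. -/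
def Btilde {X Y : Type*} [AddCommGroup X] [Module ℂ X] [AddCommGroup Y] [Module ℂ Y]
    (B : Y →ₗ[ℂ] (X →ₗ⋆[ℂ] ℂ)) : X →ₗ[ℂ] (Y →ₗ⋆[ℂ] ℂ) where
  toFun x :=
    { toFun := fun y => conj (B y x)
      map_add' := fun y₁ y₂ => by simp
      map_smul' := fun c y => by simp }
  map_add' x₁ x₂ := by ext y; simp
  map_smul' c x := by ext y; simp

/-!
`T'' = T*^{[-1]} B~` is the orthogonal projection `P` onto `K = closure (ran T)` composed with `R`:
`T'' x` lies in `K`, and `⟪T y, T'' x⟫ = (B~ x) y = ⟪T y, R x⟫`, so `R x - T'' x ⊥ K`.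
Hence `ω(ω(A,B), B~) = R* P R`, and this equals `A = R* R` iff `‖P (R x)‖ = ‖R x‖` for every `x`,
i.e. iff `ran R ⊆ K`. Since `K ⊆ closure (ran R)`, this says `K = closure (ran R)`, and taking
orthogonal complements, `ker T* = (ran T)ᗮ = (ran R)ᗮ = ker R*`.
-/

open scoped InnerProductSpace

namespace LinearMap

variable {R M N : Type*} [Ring R] [AddCommGroup M] [Module R M] [AddCommGroup N] [Module R N]
  [TopologicalSpace N] [ContinuousAdd N] [ContinuousConstSMul R N]

theorem closure_range_eq (f : M →ₗ[R] N) :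
    closure (Set.range f) = (f.range.topologicalClosure : Set N) := by
  rw [Submodule.topologicalClosure_coe, LinearMap.coe_range]

theorem topologicalClosure_range_le_iff (f : M →ₗ[R] N) {K : Submodule R N}
    (hK : IsClosed (K : Set N)) : f.range.topologicalClosure ≤ K ↔ ∀ m, f m ∈ K :=
  ⟨fun h m => h (Submodule.le_topologicalClosure _ (mem_range_self f m)),
    fun h => Submodule.topologicalClosure_minimal _ (by rintro _ ⟨m, rfl⟩; exact h m) hK⟩

end LinearMap

theorem Submodule.orthogonal_eq_orthogonal_iff {E : Type*} [NormedAddCommGroup E]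
    [InnerProductSpace ℂ E] [CompleteSpace E] {U V : Submodule ℂ E} :
    Uᗮ = Vᗮ ↔ U.topologicalClosure = V.topologicalClosure :=
  ⟨fun h => by rw [← orthogonal_orthogonal_eq_closure, h, orthogonal_orthogonal_eq_closure],
    fun h => by rw [← orthogonal_closure U, h, orthogonal_closure]⟩

section adjMap

variable {V W H : Type*} [AddCommGroup V] [Module ℂ V] [AddCommGroup W] [Module ℂ W]
  [NormedAddCommGroup H] [InnerProductSpace ℂ H]

@[simp]
theorem adjMap_apply (R : V →ₗ[ℂ] H) (h : H) (v : V) : adjMap R h v = ⟪R v, h⟫_ℂ := rfl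

theorem adjMap_eq_zero_iff (R : V →ₗ[ℂ] H) (h : H) :
    adjMap R h = 0 ↔ h ∈ (LinearMap.range R)ᗮ := by
  simp [LinearMap.ext_iff, Submodule.mem_orthogonal]

theorem norm_eq_of_adjMap_self_eq {S R : V →ₗ[ℂ] H}
    (h : ∀ v, adjMap S (S v) = adjMap R (R v)) (v : V) : ‖S v‖ = ‖R v‖ := by
  have hv := LinearMap.congr_fun (h v) v
  simp only [adjMap_apply, inner_self_eq_norm_sq_to_K] at hv
  exact (pow_left_inj₀ (norm_nonneg _) (norm_nonneg _) two_ne_zero).mp (by exact_mod_cast hv)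

theorem Btilde_eq_adjMap {R : V →ₗ[ℂ] H} {T : W →ₗ[ℂ] H} {B : W →ₗ[ℂ] (V →ₗ⋆[ℂ] ℂ)}
    (hT : ∀ w, adjMap R (T w) = B w) (v : V) : Btilde B v = adjMap T (R v) := by
  ext w
  simp [Btilde, ← hT w]

theorem adjMap_self_eq_iff_forall_mem {S R : V →ₗ[ℂ] H} (K : Submodule ℂ H)
    [K.HasOrthogonalProjection] (hS : ∀ v, S v = K.starProjection (R v)) :
    (∀ v, adjMap S (S v) = adjMap R (R v)) ↔ ∀ v, R v ∈ K := by
  refine ⟨fun h v => ?_, fun h => ?_⟩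
  · rw [K.mem_iff_norm_starProjection, ← hS, norm_eq_of_adjMap_self_eq h]
  · have hSR : S = R := LinearMap.ext fun v => by
      rw [hS, K.starProjection_eq_self_iff.mpr (h v)]
    simp [hSR]

theorem starProjection_eq_of_adjMap_eq [CompleteSpace H] {T : W →ₗ[ℂ] H} {u v : H}
    (huv : adjMap T u = adjMap T v) (hu : u ∈ T.range.topologicalClosure) :
    T.range.topologicalClosure.starProjection v = u := by
  refine Submodule.eq_starProjection_of_mem_orthogonal hu ?_
  rw [Submodule.orthogonal_closure, ← adjMap_eq_zero_iff, map_sub, huv, sub_self]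

end adjMap

theorem schur_stmt19 {X Y H : Type} [AddCommGroup X] [Module ℂ X]
    [AddCommGroup Y] [Module ℂ Y]
    [NormedAddCommGroup H] [InnerProductSpace ℂ H] [CompleteSpace H]
    (A : X →ₗ[ℂ] (X →ₗ⋆[ℂ] ℂ)) (B : Y →ₗ[ℂ] (X →ₗ⋆[ℂ] ℂ))
    (R : X →ₗ[ℂ] H) (hR : ∀ x, A x = adjMap R (R x))
    (T : Y →ₗ[ℂ] H) (hT : ∀ y, adjMap R (T y) = B y)
    (hTran : ∀ y, T y ∈ closure (Set.range R))
    -- T'' := T*⁽⁻¹⁾ B~, the operator associated with the positive pair (ω(A,B), B~),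
    -- where (T, H) is a square root of ω(A,B):
    (T'' : X →ₗ[ℂ] H) (hT'' : ∀ x, adjMap T (T'' x) = Btilde B x)
    (hT''ran : ∀ x, T'' x ∈ closure (Set.range T)) :
    -- 𝐀_ex is doubly extremal iff ker T* = ker R*, iff closure ran T = closure ran R
    ((∀ x, adjMap T'' (T'' x) = A x) ↔
        ∀ h : H, adjMap T h = 0 ↔ adjMap R h = 0) ∧
      ((∀ x, adjMap T'' (T'' x) = A x) ↔
        closure (Set.range T) = closure (Set.range R)) := by
  rw [T.closure_range_eq, R.closure_range_eq, SetLike.coe_set_eq]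
  simp only [LinearMap.closure_range_eq, SetLike.mem_coe] at hTran hT''ran
  set K := T.range.topologicalClosure
  set L := R.range.topologicalClosure
  have hproj (x : X) : T'' x = K.starProjection (R x) :=
    (starProjection_eq_of_adjMap_eq ((hT'' x).trans (Btilde_eq_adjMap hT x)) (hT''ran x)).symm
  have hKL : K ≤ L :=
    (T.topologicalClosure_range_le_iff R.range.isClosed_topologicalClosure).mpr hTran
  have hext : (∀ x, adjMap T'' (T'' x) = A x) ↔ K = L := by
    simp only [hR]
    rw [adjMap_self_eq_iff_forall_mem K hproj,
      ← R.topologicalClosure_range_le_iff T.range.isClosed_topologicalClosure]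
    exact hKL.ge_iff_eq
  have hker : (∀ h : H, adjMap T h = 0 ↔ adjMap R h = 0) ↔ K = L := by
    simp_rw [adjMap_eq_zero_iff, ← SetLike.ext_iff, Submodule.orthogonal_eq_orthogonal_iff]
    rfl
  exact ⟨hext.trans hker.symm, hext⟩
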